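/- Suppose the dispersion and survival matrices satisfy D S = S, and set α := min_{i ∈ {1,…,n}} R₀^i and β := max_{i ∈ {1,…,n}} R₀^i, where R₀^i := (N^i)_{11} with N^i := F^i (I − S^i)^{-1}. Then the net reproductive number satisfies α ≤ R₀ ≤ β. Moreover, R₀ depends monotonically on the local net reproductive numbers: if D̄ is the n×n matrix with D̄_{ij} = d_1^{i,j} and R, R' ∈ ℝ^n are nonnegative vectors with R_j ≤ R'_j for all j, then ρ(D̄ · diag(R₁,…,Rₙ)) ≤ ρ(D̄ · diag(R'₁,…,R'ₙ)). -/

import Mathlib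

open Matrix BigOperators

/-- Spectral radius of a real square matrix: the maximum modulus of its complex
eigenvalues (elements of the spectrum of the matrix viewed over `ℂ`). -/
noncomputable def specRad {ι : Type*} [Fintype ι] [DecidableEq ι]
    (M : Matrix ι ι ℝ) : ℝ :=
  sSup {r : ℝ | ∃ μ : ℂ, μ ∈ spectrum ℂ (M.map Complex.ofReal) ∧ r = ‖μ‖}

/-- The induced `L¹` operator norm of a real matrix: the maximum absolute column sum. -/
noncomputable def colNorm {ι : Type*} [Fintype ι] (M : Matrix ι ι ℝ) : ℝ :=
  ⨆ q, ∑ p, |M p q|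

/-- Local fecundity matrix: first row `(f 0, …, f (m-1))`, other rows zero. -/
def localF (m : ℕ) (f : Fin m → ℝ) : Matrix (Fin m) (Fin m) ℝ :=
  Matrix.of fun k' k => if (k' : ℕ) = 0 then f k else 0

/-- Local survival matrix: diagonal entries `sd k`, subdiagonal entries `ss k`,
all other entries zero. -/
def localS (m : ℕ) (sd ss : Fin m → ℝ) : Matrix (Fin m) (Fin m) ℝ :=
  Matrix.of fun k' k =>
    if k' = k then sd k else if (k' : ℕ) = (k : ℕ) + 1 then ss k else 0

/-- Global (block-diagonal) fecundity matrix `F = ⊕ᵢ Fⁱ`, indexed by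
(stage, patch) pairs. -/
def fecMat (m n : ℕ) (f : Fin m → Fin n → ℝ) :
    Matrix (Fin m × Fin n) (Fin m × Fin n) ℝ :=
  Matrix.of fun p q =>
    if p.2 = q.2 then localF m (fun k => f k q.2) p.1 q.1 else 0

/-- Global (block-diagonal) survival matrix `S = ⊕ᵢ Sⁱ`. -/
def survMat (m n : ℕ) (sd ss : Fin m → Fin n → ℝ) :
    Matrix (Fin m × Fin n) (Fin m × Fin n) ℝ :=
  Matrix.of fun p q =>
    if p.2 = q.2 then localS m (fun k => sd k q.2) (fun k => ss k q.2) p.1 q.1 else 0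

/-- Global dispersion matrix: the `(i,j)` patch block is `diag (d 0 i j, …, d (m-1) i j)`. -/
def dispMat (m n : ℕ) (d : Fin m → Fin n → Fin n → ℝ) :
    Matrix (Fin m × Fin n) (Fin m × Fin n) ℝ :=
  Matrix.of fun p q => if p.1 = q.1 then d q.1 p.2 q.2 else 0

/-- Next-generation matrix `N = D F (I - D S)⁻¹`. -/
noncomputable def nextGen (m n : ℕ) (f : Fin m → Fin n → ℝ)
    (sd ss : Fin m → Fin n → ℝ) (d : Fin m → Fin n → Fin n → ℝ) :
    Matrix (Fin m × Fin n) (Fin m × Fin n) ℝ :=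
  dispMat m n d * fecMat m n f * (1 - dispMat m n d * survMat m n sd ss)⁻¹

/-- Partial next-generation matrix `W = F (I - D S)⁻¹`. -/
noncomputable def partGen (m n : ℕ) (f : Fin m → Fin n → ℝ)
    (sd ss : Fin m → Fin n → ℝ) (d : Fin m → Fin n → Fin n → ℝ) :
    Matrix (Fin m × Fin n) (Fin m × Fin n) ℝ :=
  fecMat m n f * (1 - dispMat m n d * survMat m n sd ss)⁻¹

/-- Newborn submatrix: keep only the rows and columns with stage index `0`
(the newborn indices). -/
def newbornSub {m n : ℕ} (hm : 0 < m)
    (B : Matrix (Fin m × Fin n) (Fin m × Fin n) ℝ) : Matrix (Fin n) (Fin n) ℝ :=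
  Matrix.of fun i j => B (⟨0, hm⟩, i) (⟨0, hm⟩, j)

/-- The alternative net reproductive number `R̂₀ = max_{x ∈ 𝒳} ‖N x‖`, where `𝒳`
is the set of nonnegative `L¹`-unit vectors supported on the newborn indices. -/
noncomputable def altR0 (m n : ℕ)
    (N : Matrix (Fin m × Fin n) (Fin m × Fin n) ℝ) : ℝ :=
  sSup {r : ℝ | ∃ x : Fin m × Fin n → ℝ, (∀ p, 0 ≤ x p) ∧ (∑ p, |x p|) = 1 ∧
    (∀ p : Fin m × Fin n, (p.1 : ℕ) ≠ 0 → x p = 0) ∧ r = ∑ p, |N.mulVec x p|}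

/-!
Since `D S = S`, the next-generation matrix is `N = D · ⊕ᵢ Nⁱ`, and every `Nⁱ = Fⁱ (I - Sⁱ)⁻¹`
vanishes outside its newborn row. So `N` factors through the newborn indices, and since `AB` and
`BA` have the same nonzero spectrum, `R₀ = ρ(diag(R₀ⁱ) D̄)`. The columns of `D̄` sum to one, so
each column sum of `diag(R₀ⁱ) D̄` is a convex combination of the `R₀ⁱ`; for a nonnegative matrix
the spectral radius lies between the smallest and the largest row (or column) sum. The lower bound
and the monotonicity in `R` come from Gelfand's formula, because entrywise domination of
nonnegative matrices passes to their powers and hence to the `ℓ^∞` norms of those powers.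
-/

open Filter Topology

attribute [local instance] Matrix.linftyOpNormedAddCommGroup Matrix.linftyOpNormedRing
  Matrix.linftyOpNormedAlgebra

lemma map_ofReal_mul {ι κ τ : Type*} [Fintype κ] (A : Matrix ι κ ℝ) (B : Matrix κ τ ℝ) :
    (A * B).map Complex.ofReal = A.map Complex.ofReal * B.map Complex.ofReal :=
  Matrix.map_mul (f := Complex.ofRealHom)

lemma sum_abs_eq_sum_of_nonneg {ι κ : Type*} [Fintype κ] {M : Matrix ι κ ℝ}
    (hM : ∀ i j, 0 ≤ M i j) (i : ι) : ∑ j, |M i j| = ∑ j, M i j :=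
  Finset.sum_congr rfl fun j _ => abs_of_nonneg (hM i j)

section LinftyNorm

variable {ι κ : Type*} [Fintype ι] [Fintype κ]

lemma sum_abs_le_linfty_opNorm (M : Matrix ι κ ℝ) (i : ι) : ∑ j, |M i j| ≤ ‖M‖ := by
  rw [linfty_opNorm_def]
  calc ∑ j, |M i j| = ((∑ j, ‖M i j‖₊ : NNReal) : ℝ) := by push_cast; rfl
    _ ≤ _ := NNReal.coe_le_coe.mpr
      (Finset.le_sup (f := fun i => ∑ j, ‖M i j‖₊) (Finset.mem_univ i))

lemma exists_linfty_opNorm_eq_sum_abs [Nonempty ι] (M : Matrix ι κ ℝ) :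
    ∃ i, ‖M‖ = ∑ j, |M i j| := by
  obtain ⟨i, -, hi⟩ :=
    Finset.exists_mem_eq_sup Finset.univ Finset.univ_nonempty fun i => ∑ j, ‖M i j‖₊
  exact ⟨i, by rw [linfty_opNorm_def, hi]; push_cast; rfl⟩

lemma linfty_opNorm_map_ofReal (M : Matrix ι κ ℝ) : ‖M.map Complex.ofReal‖ = ‖M‖ := by
  simp only [linfty_opNorm_def, map_apply, Complex.nnnorm_real]

end LinftyNorm

section SpectralRadius

variable {ι κ : Type*} [Fintype ι] [DecidableEq ι] [Fintype κ] [DecidableEq κ]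

lemma specRad_bddAbove [Nonempty ι] (M : Matrix ι ι ℝ) :
    BddAbove {r : ℝ | ∃ μ : ℂ, μ ∈ spectrum ℂ (M.map Complex.ofReal) ∧ r = ‖μ‖} :=
  ⟨‖M‖, by
    rintro r ⟨μ, hμ, rfl⟩
    exact linfty_opNorm_map_ofReal M ▸ spectrum.norm_le_norm_of_mem hμ⟩

lemma norm_le_specRad [Nonempty ι] {M : Matrix ι ι ℝ} {μ : ℂ}
    (hμ : μ ∈ spectrum ℂ (M.map Complex.ofReal)) : ‖μ‖ ≤ specRad M :=
  le_csSup (specRad_bddAbove M) ⟨μ, hμ, rfl⟩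

lemma specRad_le [Nonempty ι] {M : Matrix ι ι ℝ} {c : ℝ}
    (h : ∀ μ ∈ spectrum ℂ (M.map Complex.ofReal), ‖μ‖ ≤ c) : specRad M ≤ c := by
  obtain ⟨μ, hμ⟩ := spectrum.nonempty (M.map Complex.ofReal)
  exact csSup_le ⟨_, μ, hμ, rfl⟩ (by rintro r ⟨μ, hμ, rfl⟩; exact h μ hμ)

lemma specRad_nonneg [Nonempty ι] (M : Matrix ι ι ℝ) : 0 ≤ specRad M := by
  obtain ⟨μ, hμ⟩ := spectrum.nonempty (M.map Complex.ofReal)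
  exact (norm_nonneg μ).trans (norm_le_specRad hμ)

lemma specRad_le_linfty_opNorm [Nonempty ι] (M : Matrix ι ι ℝ) : specRad M ≤ ‖M‖ :=
  specRad_le fun _ hμ => linfty_opNorm_map_ofReal M ▸ spectrum.norm_le_norm_of_mem hμ

lemma specRad_eq_toReal_spectralRadius [Nonempty ι] (M : Matrix ι ι ℝ) :
    specRad M = (spectralRadius ℂ (M.map Complex.ofReal)).toReal := by
  obtain ⟨μ₀, hμ₀, hr⟩ := spectrum.exists_nnnorm_eq_spectralRadius (M.map Complex.ofReal)
  rw [← hr, ENNReal.coe_toReal, coe_nnnorm]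
  refine le_antisymm (specRad_le fun μ hμ => ?_) (norm_le_specRad hμ₀)
  have : (‖μ‖₊ : ENNReal) ≤ ‖μ₀‖₊ := hr ▸
    le_iSup₂ (f := fun k (_ : k ∈ spectrum ℂ (M.map Complex.ofReal)) => (‖k‖₊ : ENNReal)) μ hμ
  exact_mod_cast this

lemma tendsto_linfty_opNorm_pow_rpow_specRad [Nonempty ι] (M : Matrix ι ι ℝ) :
    Tendsto (fun k : ℕ => ‖M ^ k‖ ^ (1 / k : ℝ)) atTop (𝓝 (specRad M)) := by
  have hfin : spectralRadius ℂ (M.map Complex.ofReal) ≠ ⊤ :=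
    ne_top_of_le_ne_top ENNReal.coe_ne_top (spectrum.spectralRadius_le_nnnorm _)
  rw [specRad_eq_toReal_spectralRadius]
  refine ((ENNReal.tendsto_toReal hfin).comp
    (spectrum.pow_norm_pow_one_div_tendsto_nhds_spectralRadius _)).congr fun k => ?_
  have hpow : M.map Complex.ofReal ^ k = (M ^ k).map Complex.ofReal :=
    (Matrix.map_pow M Complex.ofRealHom k).symm
  simp only [Function.comp_apply, hpow, linfty_opNorm_map_ofReal]
  exact ENNReal.toReal_ofReal (Real.rpow_nonneg (norm_nonneg _) _)

lemma specRad_transpose (M : Matrix ι ι ℝ) : specRad Mᵀ = specRad M := by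
  rw [specRad, specRad, transpose_map]
  simp only [mem_spectrum_iff_isRoot_charpoly, charpoly_transpose]

lemma mem_spectrum_mul_comm {K : Type*} [Field K] (A : Matrix ι κ K) (B : Matrix κ ι K) {μ : K}
    (hμ : μ ≠ 0) : μ ∈ spectrum K (A * B) ↔ μ ∈ spectrum K (B * A) := by
  have h := congrArg (Polynomial.eval μ) (charpoly_mul_comm' A B)
  simp only [Polynomial.eval_mul, Polynomial.eval_pow, Polynomial.eval_X] at h
  simp only [mem_spectrum_iff_isRoot_charpoly, Polynomial.IsRoot.def]
  constructor <;> intro h0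
  · simpa [h0, hμ] using h
  · simpa [h0, hμ] using h.symm

lemma specRad_le_specRad_of_mem_spectrum [Nonempty ι] [Nonempty κ] {M : Matrix ι ι ℝ}
    {K : Matrix κ κ ℝ} (h : ∀ μ ≠ 0, μ ∈ spectrum ℂ (M.map Complex.ofReal) →
      μ ∈ spectrum ℂ (K.map Complex.ofReal)) : specRad M ≤ specRad K := by
  refine specRad_le fun μ hμ => ?_
  rcases eq_or_ne μ 0 with rfl | h0
  · simpa using specRad_nonneg K
  · exact norm_le_specRad (h μ h0 hμ)

lemma specRad_mul_comm [Nonempty ι] [Nonempty κ] (A : Matrix ι κ ℝ) (B : Matrix κ ι ℝ) :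
    specRad (A * B) = specRad (B * A) := by
  have hspec : ∀ μ : ℂ, μ ≠ 0 → (μ ∈ spectrum ℂ ((A * B).map Complex.ofReal) ↔
      μ ∈ spectrum ℂ ((B * A).map Complex.ofReal)) := fun μ hμ => by
    rw [map_ofReal_mul, map_ofReal_mul]
    exact mem_spectrum_mul_comm _ _ hμ
  exact le_antisymm (specRad_le_specRad_of_mem_spectrum fun μ hμ => (hspec μ hμ).1)
    (specRad_le_specRad_of_mem_spectrum fun μ hμ => (hspec μ hμ).2)

end SpectralRadius

lemma specRad_mul_eq_specRad_submatrix {κ ι : Type*} [Fintype κ] [DecidableEq κ] [Fintype ι]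
    [DecidableEq ι] [Nonempty ι] (D X : Matrix (κ × ι) (κ × ι) ℝ) (k₀ : κ)
    (hX : ∀ p q, p.1 ≠ k₀ → X p q = 0) :
    specRad (D * X) = specRad ((X * D).submatrix (k₀, ·) (k₀, ·)) := by
  have : Nonempty κ := ⟨k₀⟩
  have hfactor : D * X = D.submatrix id (k₀, ·) * X.submatrix (k₀, ·) id := by
    ext p q
    simp only [mul_apply, submatrix_apply, id, Fintype.sum_prod_type]
    exact Finset.sum_eq_single k₀
      (fun k _ hk => Finset.sum_eq_zero fun i _ => by rw [hX _ _ hk, mul_zero]) (by simp)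
  rw [hfactor, specRad_mul_comm, ← submatrix_mul _ _ _ _ _ Function.bijective_id]

section Nonneg

variable {ι : Type*} [Fintype ι] [DecidableEq ι]

lemma pow_apply_le_pow_apply {A B : Matrix ι ι ℝ} (hA : ∀ i j, 0 ≤ A i j)
    (hAB : ∀ i j, A i j ≤ B i j) (k : ℕ) (i j : ι) : (A ^ k) i j ≤ (B ^ k) i j := by
  induction k generalizing j with
  | zero => rfl
  | succ k ih =>
    rw [pow_succ, pow_succ, mul_apply, mul_apply]
    exact Finset.sum_le_sum fun r _ =>
      mul_le_mul (ih r) (hAB r j) (hA r j) ((pow_apply_nonneg hA k i r).trans (ih r))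

lemma pow_le_sum_pow_apply {M : Matrix ι ι ℝ} {α : ℝ} (hM : ∀ i j, 0 ≤ M i j) (hα : 0 ≤ α)
    (hrow : ∀ i, α ≤ ∑ j, M i j) (k : ℕ) (i : ι) : α ^ k ≤ ∑ j, (M ^ k) i j := by
  induction k generalizing i with
  | zero => simp [one_apply]
  | succ k ih =>
    have hsum : ∑ j, (M ^ (k + 1)) i j = ∑ r, M i r * ∑ j, (M ^ k) r j := by
      simp_rw [pow_succ', mul_apply, Finset.mul_sum]
      exact Finset.sum_comm
    calc α ^ (k + 1) = α * α ^ k := pow_succ' α k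
      _ ≤ (∑ r, M i r) * α ^ k := mul_le_mul_of_nonneg_right (hrow i) (pow_nonneg hα k)
      _ = ∑ r, M i r * α ^ k := Finset.sum_mul _ _ _
      _ ≤ ∑ j, (M ^ (k + 1)) i j := hsum ▸
          Finset.sum_le_sum fun r _ => mul_le_mul_of_nonneg_left (ih r) (hM i r)

lemma specRad_le_of_sum_row_le [Nonempty ι] {M : Matrix ι ι ℝ} {β : ℝ}
    (hM : ∀ i j, 0 ≤ M i j) (hrow : ∀ i, ∑ j, M i j ≤ β) : specRad M ≤ β := by
  obtain ⟨i, hi⟩ := exists_linfty_opNorm_eq_sum_abs M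
  exact (specRad_le_linfty_opNorm M).trans (hi ▸ sum_abs_eq_sum_of_nonneg hM i ▸ hrow i)

lemma le_specRad_of_le_sum_row [Nonempty ι] {M : Matrix ι ι ℝ} {α : ℝ} (hα : 0 ≤ α)
    (hM : ∀ i j, 0 ≤ M i j) (hrow : ∀ i, α ≤ ∑ j, M i j) : α ≤ specRad M := by
  obtain ⟨i⟩ := ‹Nonempty ι›
  refine ge_of_tendsto (tendsto_linfty_opNorm_pow_rpow_specRad M) ?_
  filter_upwards [eventually_ge_atTop 1] with k hk
  have hpow : α ^ k ≤ ‖M ^ k‖ :=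
    (pow_le_sum_pow_apply hM hα hrow k i).trans
      (sum_abs_eq_sum_of_nonneg (pow_apply_nonneg hM k) i ▸ sum_abs_le_linfty_opNorm _ i)
  calc α = (α ^ k) ^ (1 / k : ℝ) := by rw [one_div, Real.pow_rpow_inv_natCast hα (by omega)]
    _ ≤ ‖M ^ k‖ ^ (1 / k : ℝ) := by gcongr

lemma specRad_mono [Nonempty ι] {A B : Matrix ι ι ℝ} (hA : ∀ i j, 0 ≤ A i j)
    (hAB : ∀ i j, A i j ≤ B i j) : specRad A ≤ specRad B := by
  refine le_of_tendsto_of_tendsto' (tendsto_linfty_opNorm_pow_rpow_specRad A)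
    (tendsto_linfty_opNorm_pow_rpow_specRad B) fun k => ?_
  obtain ⟨i, hi⟩ := exists_linfty_opNorm_eq_sum_abs (A ^ k)
  have hnorm : ‖A ^ k‖ ≤ ‖B ^ k‖ := by
    refine hi ▸ (Finset.sum_le_sum fun j _ => ?_).trans (sum_abs_le_linfty_opNorm _ i)
    rw [abs_of_nonneg (pow_apply_nonneg hA k i j),
      abs_of_nonneg ((pow_apply_nonneg hA k i j).trans (pow_apply_le_pow_apply hA hAB k i j))]
    exact pow_apply_le_pow_apply hA hAB k i j
  gcongr

lemma specRad_diagonal_mul_mem_Icc [Nonempty ι] {R : ι → ℝ} {P : Matrix ι ι ℝ}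
    (hR : ∀ i, 0 ≤ R i) (hP : ∀ i j, 0 ≤ P i j) (hcol : ∀ j, ∑ i, P i j = 1) :
    specRad (diagonal R * P) ∈ Set.Icc (⨅ i, R i) (⨆ i, R i) := by
  rw [← specRad_transpose]
  have hsum : ∀ j, ∑ i, (diagonal R * P)ᵀ j i = ∑ i, P i j * R i := fun j =>
    Finset.sum_congr rfl fun i _ => by rw [transpose_apply, diagonal_mul, mul_comm]
  have hK : ∀ j i, 0 ≤ (diagonal R * P)ᵀ j i := fun j i => by
    rw [transpose_apply, diagonal_mul]; exact mul_nonneg (hR i) (hP i j)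
  constructor
  · refine le_specRad_of_le_sum_row (le_ciInf hR) hK fun j => hsum j ▸ ?_
    calc ⨅ i, R i = ∑ i, P i j * ⨅ i, R i := by rw [← Finset.sum_mul, hcol, one_mul]
      _ ≤ ∑ i, P i j * R i := Finset.sum_le_sum fun i _ =>
          mul_le_mul_of_nonneg_left (ciInf_le (Finite.bddBelow_range R) i) (hP i j)
  · refine specRad_le_of_sum_row_le hK fun j => hsum j ▸ ?_
    calc ∑ i, P i j * R i ≤ ∑ i, P i j * ⨆ i, R i := Finset.sum_le_sum fun i _ =>
          mul_le_mul_of_nonneg_left (le_ciSup (Finite.bddAbove_range R) i) (hP i j)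
      _ = ⨆ i, R i := by rw [← Finset.sum_mul, hcol, one_mul]

lemma specRad_mul_diagonal_mono [Nonempty ι] {P : Matrix ι ι ℝ} {R R' : ι → ℝ}
    (hP : ∀ i j, 0 ≤ P i j) (hR : ∀ i, 0 ≤ R i) (hRR' : ∀ i, R i ≤ R' i) :
    specRad (P * diagonal R) ≤ specRad (P * diagonal R') := by
  refine specRad_mono (fun i j => ?_) fun i j => ?_
  · rw [mul_diagonal]
    exact mul_nonneg (hP i j) (hR j)
  · rw [mul_diagonal, mul_diagonal]
    exact mul_le_mul_of_nonneg_left (hRR' j) (hP i j)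

end Nonneg

lemma inv_blockDiagonal {o μ R : Type*} [Fintype o] [DecidableEq o] [Fintype μ] [DecidableEq μ]
    [CommRing R] (M : o → Matrix μ μ R) (hM : ∀ i, IsUnit (M i).det) :
    (blockDiagonal M)⁻¹ = blockDiagonal fun i => (M i)⁻¹ := by
  refine inv_eq_right_inv ?_
  rw [← blockDiagonal_mul]
  simp only [mul_nonsing_inv _ (hM _)]
  exact blockDiagonal_one

section Neumann

variable {ι : Type*} [Fintype ι] [DecidableEq ι]

-- Column sums `< 1` give `‖Mᵀ‖ < 1`, so the Neumann series `∑ (Mᵀ)ᵏ` inverts `1 - Mᵀ`.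
lemma isUnit_det_one_sub_and_inv_nonneg [Nonempty ι] {M : Matrix ι ι ℝ}
    (hM : ∀ i j, 0 ≤ M i j) (hcol : ∀ j, ∑ i, M i j < 1) :
    IsUnit (1 - M).det ∧ ∀ i j, 0 ≤ (1 - M)⁻¹ i j := by
  have hnorm : ‖Mᵀ‖ < 1 := by
    obtain ⟨j, hj⟩ := exists_linfty_opNorm_eq_sum_abs Mᵀ
    rw [hj, sum_abs_eq_sum_of_nonneg (M := Mᵀ) (fun j i => hM i j)]
    exact hcol j
  have hinv : (1 - Mᵀ) * ∑' k : ℕ, Mᵀ ^ k = 1 := mul_neg_geom_series _ hnorm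
  have htr : (1 - M)ᵀ = 1 - Mᵀ := by rw [transpose_sub, transpose_one]
  refine ⟨?_, fun i j => ?_⟩
  · rw [← det_transpose, htr]
    exact isUnit_det_of_right_inverse hinv
  · have hsum : HasSum (fun k : ℕ => Mᵀ ^ k) (∑' k : ℕ, Mᵀ ^ k) :=
      (summable_geometric_of_norm_lt_one hnorm).hasSum
    rw [← transpose_transpose (1 - M)⁻¹, transpose_nonsing_inv, htr, inv_eq_right_inv hinv]
    exact (Pi.hasSum.mp (Pi.hasSum.mp hsum j) i).nonneg
      fun k => pow_apply_nonneg (fun j i => hM i j) k j i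

end Neumann

section StageStructured

variable {m n : ℕ}

lemma localS_nonneg {sd ss : Fin m → ℝ} (hsd : ∀ k, 0 ≤ sd k) (hss : ∀ k, 0 ≤ ss k)
    (k l : Fin m) : 0 ≤ localS m sd ss k l := by
  simp only [localS, of_apply]
  split_ifs
  exacts [hsd l, hss l, le_rfl]

lemma localF_mul_apply_nonneg {g : Fin m → ℝ} {X : Matrix (Fin m) (Fin m) ℝ}
    (hg : ∀ k, 0 ≤ g k) (hX : ∀ k l, 0 ≤ X k l) (k l : Fin m) : 0 ≤ (localF m g * X) k l := by
  rw [mul_apply]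
  refine Finset.sum_nonneg fun r _ => mul_nonneg ?_ (hX r l)
  simp only [localF, of_apply]
  split_ifs
  exacts [hg r, le_rfl]

lemma sum_localS_apply (sd ss : Fin m → ℝ) (k : Fin m) :
    ∑ k', localS m sd ss k' k = sd k + if (k : ℕ) + 1 < m then ss k else 0 := by
  have hsplit : ∀ k' : Fin m, localS m sd ss k' k =
      (if k' = k then sd k else 0) + if (k' : ℕ) = (k : ℕ) + 1 then ss k else 0 := by
    intro k'
    rcases eq_or_ne k' k with rfl | h
    · simp [localS]
    · simp [localS, h]
  rw [Finset.sum_congr rfl fun k' _ => hsplit k', Finset.sum_add_distrib, Finset.sum_ite_eq']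
  simp only [Finset.mem_univ, if_true, add_right_inj]
  split_ifs with h
  · rw [Finset.sum_eq_single ⟨(k : ℕ) + 1, h⟩
      (fun k' _ hk' => if_neg fun hc => hk' (Fin.ext hc)) (by simp), if_pos rfl]
  · exact Finset.sum_eq_zero fun k' _ => if_neg fun (hc : (k' : ℕ) = k + 1) => h (hc ▸ k'.isLt)

lemma one_sub_survMat (sd ss : Fin m → Fin n → ℝ) :
    1 - survMat m n sd ss =
      blockDiagonal fun i => 1 - localS m (fun k => sd k i) (fun k => ss k i) := by
  ext ⟨k, i⟩ ⟨l, j⟩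
  rw [blockDiagonal_apply]
  by_cases h : i = j <;> simp [survMat, one_apply, h]

lemma fecMat_eq_blockDiagonal (f : Fin m → Fin n → ℝ) :
    fecMat m n f = blockDiagonal fun i => localF m (fun k => f k i) := by
  ext p q
  rw [blockDiagonal_apply]
  by_cases h : p.2 = q.2 <;> simp [fecMat, h]

lemma fecMat_mul_apply_of_ne_zero (f : Fin m → Fin n → ℝ)
    (X : Matrix (Fin m × Fin n) (Fin m × Fin n) ℝ) {p : Fin m × Fin n} (hp : (p.1 : ℕ) ≠ 0)
    (q : Fin m × Fin n) : (fecMat m n f * X) p q = 0 := by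
  rw [mul_apply]
  exact Finset.sum_eq_zero fun r _ => by simp [fecMat, localF, hp]

lemma newbornSub_blockDiagonal (hm : 0 < m) (M : Fin n → Matrix (Fin m) (Fin m) ℝ) :
    newbornSub hm (blockDiagonal M) = diagonal fun i => M i ⟨0, hm⟩ ⟨0, hm⟩ := by
  ext i j
  by_cases h : i = j <;> simp [newbornSub, blockDiagonal_apply, h]

lemma newbornSub_mul_dispMat (hm : 0 < m) (B : Matrix (Fin m × Fin n) (Fin m × Fin n) ℝ)
    (d : Fin m → Fin n → Fin n → ℝ) :
    newbornSub hm (B * dispMat m n d) = newbornSub hm B * newbornSub hm (dispMat m n d) := by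
  ext i j
  simp only [newbornSub, of_apply, mul_apply, Fintype.sum_prod_type]
  rw [Finset.sum_eq_single ⟨0, hm⟩ (fun k _ hk => by simp [dispMat, hk]) (by simp)]

lemma newbornSub_dispMat_apply (hm : 0 < m) (d : Fin m → Fin n → Fin n → ℝ) (i j : Fin n) :
    newbornSub hm (dispMat m n d) i j = d ⟨0, hm⟩ i j := by
  simp [newbornSub, dispMat]

end StageStructured

theorem stmt12
    (m n : ℕ) (hm : 2 ≤ m) (hn : 1 ≤ n)
    (f : Fin m → Fin n → ℝ) (hf : ∀ k i, 0 ≤ f k i)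
    (sd ss : Fin m → Fin n → ℝ)
    (hsd : ∀ k i, 0 ≤ sd k i) (hss : ∀ k i, 0 ≤ ss k i)
    (hs1 : ∀ (k : Fin m) (i : Fin n),
      sd k i + (if (k : ℕ) + 1 < m then ss k i else 0) < 1)
    (d : Fin m → Fin n → Fin n → ℝ)
    (hd0 : ∀ k i j, 0 ≤ d k i j)
    (hdsum : ∀ k j, ∑ i, d k i j = 1)
    (hDS : dispMat m n d * survMat m n sd ss = survMat m n sd ss) :
    (⨅ i : Fin n,
        (localF m (fun k => f k i) *
          (1 - localS m (fun k => sd k i) (fun k => ss k i))⁻¹)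
          ⟨0, show 0 < m by omega⟩ ⟨0, show 0 < m by omega⟩) ≤
        specRad (nextGen m n f sd ss d) ∧
      specRad (nextGen m n f sd ss d) ≤
        (⨆ i : Fin n,
          (localF m (fun k => f k i) *
            (1 - localS m (fun k => sd k i) (fun k => ss k i))⁻¹)
            ⟨0, show 0 < m by omega⟩ ⟨0, show 0 < m by omega⟩) ∧
      ∀ R R' : Fin n → ℝ, (∀ j, 0 ≤ R j) → (∀ j, 0 ≤ R' j) → (∀ j, R j ≤ R' j) →
        specRad (newbornSub (show 0 < m by omega) (dispMat m n d) *
            Matrix.diagonal R) ≤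
          specRad (newbornSub (show 0 < m by omega) (dispMat m n d) *
            Matrix.diagonal R') := by
  have hm0 : 0 < m := by omega
  have : Nonempty (Fin m) := ⟨⟨0, hm0⟩⟩
  have : Nonempty (Fin n) := ⟨⟨0, by omega⟩⟩
  set z : Fin m := ⟨0, hm0⟩
  set G : Fin n → Matrix (Fin m) (Fin m) ℝ :=
    fun i => (1 - localS m (fun k => sd k i) (fun k => ss k i))⁻¹
  have hG : ∀ i, IsUnit (1 - localS m (fun k => sd k i) (fun k => ss k i)).det ∧
      ∀ k l, 0 ≤ G i k l := fun i =>
    isUnit_det_one_sub_and_inv_nonneg (localS_nonneg (hsd · i) (hss · i))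
      fun k => (sum_localS_apply _ _ k).symm ▸ hs1 k i
  set R₀ : Fin n → ℝ := fun i => (localF m (fun k => f k i) * G i) z z
  have hR₀ : ∀ i, 0 ≤ R₀ i := fun i => localF_mul_apply_nonneg (hf · i) (hG i).2 z z
  have hpartGen : newbornSub hm0 (partGen m n f sd ss d) = diagonal R₀ := by
    rw [partGen, hDS, one_sub_survMat, inv_blockDiagonal _ fun i => (hG i).1,
      fecMat_eq_blockDiagonal, ← blockDiagonal_mul, newbornSub_blockDiagonal]
  have hnextGen : specRad (nextGen m n f sd ss d) =
      specRad (diagonal R₀ * newbornSub hm0 (dispMat m n d)) := by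
    rw [nextGen, Matrix.mul_assoc, specRad_mul_eq_specRad_submatrix _ _ z
      fun p q hp => fecMat_mul_apply_of_ne_zero f _ (fun h => hp (Fin.ext h)) q]
    change specRad (newbornSub hm0 (partGen m n f sd ss d * dispMat m n d)) = _
    rw [newbornSub_mul_dispMat, hpartGen]
  have hD : ∀ i j, 0 ≤ newbornSub hm0 (dispMat m n d) i j := fun i j =>
    (newbornSub_dispMat_apply hm0 d i j).symm ▸ hd0 z i j
  have hcol : ∀ j, ∑ i, newbornSub hm0 (dispMat m n d) i j = 1 := fun j => by
    simp_rw [newbornSub_dispMat_apply]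
    exact hdsum z j
  obtain ⟨hlow, hup⟩ := specRad_diagonal_mul_mem_Icc hR₀ hD hcol
  exact ⟨hnextGen ▸ hlow, hnextGen ▸ hup,
    fun R R' hR _ hRR' => specRad_mul_diagonal_mono hD hR hRR'⟩
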